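/- Let N ≥ 2 be an integer and ζ = exp(2πi/N). Then Σ_{l=1}^{N−1} ζ^{2l}/(ζ^l − 1)² = −(N−1)(N−5)/12, i.e. S_{2,2} = −(N−1)(N−5)/12. Consequently the critical central circulation γ_N* = (N−1)(N−5)/12 of the paper satisfies γ_N* = −S_{2,2}. -/

import Mathlib

/-!
For an `N`-th root of unity `x ≠ 1` the telescoping identity
`(x - 1) ∑ k xᵏ = N xᴺ - x ∑ xᵏ` gives `∑_{k<N} k xᵏ = N / (x - 1)`. Dividing once more by
`x - 1` and using `xᵏ / (x - 1) = 1 / (x - 1) + ∑_{i<k} xⁱ` writes `N / (x - 1)²` as a multiple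
of `1 / (x - 1)` plus a polynomial in `x` of degree `< N`. Summed over `x = ζˡ`, `1 ≤ l < N`,
every power sum `∑_l ζ^{li}` with `0 < i < N` equals `-1`, so only `∑ k` and `∑ k²` survive.
Finally `ζ^{2l} / (ζˡ - 1)² = 1 + 2 / (ζˡ - 1) + 1 / (ζˡ - 1)²`.
-/

open Real Finset

/-- `S_{n,k} = ∑_{l=1}^{N-1} ζ^{lk}/(ζ^l - 1)^n`, where `ζ = exp(2πi/N)`. -/
noncomputable def S (N n k : ℕ) : ℂ :=
  ∑ l ∈ Finset.Ico 1 N,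
    (Complex.exp (2 * π * Complex.I / N)) ^ (l * k) /
      ((Complex.exp (2 * π * Complex.I / N)) ^ l - 1) ^ n

section CommRing

variable {R : Type*} [CommRing R]

theorem two_mul_sum_range_natCast (n : ℕ) : 2 * ∑ k ∈ range n, (k : R) = n * (n - 1) := by
  induction n with
  | zero => simp
  | succ n ih =>
    rw [sum_range_succ]
    push_cast
    linear_combination ih

theorem six_mul_sum_range_natCast_sq (n : ℕ) :
    6 * ∑ k ∈ range n, (k : R) ^ 2 = n * (n - 1) * (2 * n - 1) := by
  induction n with
  | zero => simp
  | succ n ih =>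
    rw [sum_range_succ]
    push_cast
    linear_combination ih

theorem sub_one_mul_sum_range_natCast_mul_pow (x : R) (n : ℕ) :
    (x - 1) * ∑ k ∈ range n, (k : R) * x ^ k = n * x ^ n - x * ∑ k ∈ range n, x ^ k := by
  induction n with
  | zero => simp
  | succ n ih =>
    rw [sum_range_succ, sum_range_succ, mul_add]
    push_cast
    linear_combination ih

end CommRing

section Field

variable {K : Type*} [Field K] {x : K} {n : ℕ}

theorem geom_sum_eq_zero_of_pow_eq_one (hxn : x ^ n = 1) (hx : x ≠ 1) :
    ∑ i ∈ range n, x ^ i = 0 := by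
  rw [geom_sum_eq hx, hxn, sub_self, zero_div]

theorem sum_range_natCast_mul_pow_eq_div (hxn : x ^ n = 1) (hx : x ≠ 1) :
    ∑ k ∈ range n, (k : K) * x ^ k = n / (x - 1) := by
  have h := sub_one_mul_sum_range_natCast_mul_pow x n
  rw [hxn, geom_sum_eq_zero_of_pow_eq_one hxn hx, mul_one, mul_zero, sub_zero] at h
  rw [eq_div_iff (sub_ne_zero.2 hx), mul_comm, h]

theorem pow_div_sub_one (hx : x ≠ 1) (k : ℕ) :
    x ^ k / (x - 1) = (x - 1)⁻¹ + ∑ i ∈ range k, x ^ i := by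
  have hx' : x - 1 ≠ 0 := sub_ne_zero.2 hx
  rw [geom_sum_eq hx]
  field_simp
  ring

theorem natCast_mul_inv_sub_one_sq (hxn : x ^ n = 1) (hx : x ≠ 1) :
    n * ((x - 1) ^ 2)⁻¹ = (∑ k ∈ range n, (k : K)) * (x - 1)⁻¹
      + ∑ k ∈ range n, (k : K) * ∑ i ∈ range k, x ^ i := by
  calc (n : K) * ((x - 1) ^ 2)⁻¹ = (∑ k ∈ range n, (k : K) * x ^ k) / (x - 1) := by
        rw [sum_range_natCast_mul_pow_eq_div hxn hx, div_div, ← sq, div_eq_mul_inv]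
    _ = ∑ k ∈ range n, (k : K) * ((x - 1)⁻¹ + ∑ i ∈ range k, x ^ i) := by
        simp_rw [sum_div, mul_div_assoc, pow_div_sub_one hx]
    _ = _ := by simp_rw [mul_add, sum_add_distrib, sum_mul]

theorem sq_div_sub_one_sq (hx : x ≠ 1) :
    x ^ 2 / (x - 1) ^ 2 = 1 + 2 * (x - 1)⁻¹ + ((x - 1) ^ 2)⁻¹ := by
  have hx' : x - 1 ≠ 0 := sub_ne_zero.2 hx
  field_simp
  ring

end Field

namespace IsPrimitiveRoot

variable {K : Type*} [Field K] {ζ : K} {N : ℕ}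

theorem pow_pow_eq_one (hζ : IsPrimitiveRoot ζ N) (l : ℕ) : (ζ ^ l) ^ N = 1 := by
  rw [pow_right_comm, hζ.pow_eq_one, one_pow]

theorem pow_ne_one_of_mem_Ico (hζ : IsPrimitiveRoot ζ N) {l : ℕ} (hl : l ∈ Ico 1 N) :
    ζ ^ l ≠ 1 :=
  hζ.pow_ne_one_of_pos_of_lt (by rw [mem_Ico] at hl; omega) (mem_Ico.1 hl).2

theorem sum_Ico_pow_pow (hζ : IsPrimitiveRoot ζ N) {i : ℕ} (hi : i < N) :
    ∑ l ∈ Ico 1 N, (ζ ^ l) ^ i = if i = 0 then (N : K) - 1 else -1 := by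
  have hfull : ∑ l ∈ range N, (ζ ^ i) ^ l = if i = 0 then (N : K) else 0 := by
    split_ifs with h
    · simp [h]
    · exact geom_sum_eq_zero_of_pow_eq_one (hζ.pow_pow_eq_one i) (hζ.pow_ne_one_of_pos_of_lt h hi)
  rw [sum_range_eq_add_Ico _ (by omega)] at hfull
  simp_rw [pow_right_comm ζ _ i]
  split_ifs at hfull ⊢ <;> linear_combination hfull

theorem natCast_mul_sum_range_sum_Ico_pow_pow (hζ : IsPrimitiveRoot ζ N) {k : ℕ} (hk : k ≤ N) :
    (k : K) * ∑ i ∈ range k, ∑ l ∈ Ico 1 N, (ζ ^ l) ^ i = k * (N - k) := by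
  cases k with
  | zero => simp
  | succ k =>
    rw [sum_range_succ', hζ.sum_Ico_pow_pow (by omega : 0 < N),
      sum_congr rfl fun i hi => hζ.sum_Ico_pow_pow (by rw [mem_range] at hi; omega : i + 1 < N)]
    simp only [Nat.add_one_ne_zero, if_false, if_true, sum_const, card_range, nsmul_eq_mul]
    push_cast
    ring

theorem natCast_mul_sum_inv_sub_one (hζ : IsPrimitiveRoot ζ N) :
    (N : K) * ∑ l ∈ Ico 1 N, (ζ ^ l - 1)⁻¹ = -∑ k ∈ range N, (k : K) :=
  calc (N : K) * ∑ l ∈ Ico 1 N, (ζ ^ l - 1)⁻¹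
      = ∑ l ∈ Ico 1 N, ∑ k ∈ range N, (k : K) * (ζ ^ l) ^ k := by
        rw [mul_sum]
        refine sum_congr rfl fun l hl => ?_
        rw [sum_range_natCast_mul_pow_eq_div (hζ.pow_pow_eq_one l) (hζ.pow_ne_one_of_mem_Ico hl),
          div_eq_mul_inv]
    _ = ∑ k ∈ range N, (k : K) * ∑ l ∈ Ico 1 N, (ζ ^ l) ^ k := by
        rw [sum_comm]
        simp_rw [mul_sum]
    _ = -∑ k ∈ range N, (k : K) := by
        rw [← sum_neg_distrib]
        refine sum_congr rfl fun k hk => ?_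
        rw [hζ.sum_Ico_pow_pow (mem_range.1 hk)]
        split_ifs with h <;> simp [h]

theorem natCast_mul_sum_inv_sub_one_sq (hζ : IsPrimitiveRoot ζ N) :
    (N : K) * ∑ l ∈ Ico 1 N, ((ζ ^ l - 1) ^ 2)⁻¹
      = (∑ k ∈ range N, (k : K)) * ∑ l ∈ Ico 1 N, (ζ ^ l - 1)⁻¹
        + ∑ k ∈ range N, (k : K) * (N - k) :=
  calc (N : K) * ∑ l ∈ Ico 1 N, ((ζ ^ l - 1) ^ 2)⁻¹
      = ∑ l ∈ Ico 1 N, ((∑ k ∈ range N, (k : K)) * (ζ ^ l - 1)⁻¹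
          + ∑ k ∈ range N, (k : K) * ∑ i ∈ range k, (ζ ^ l) ^ i) := by
        rw [mul_sum]
        exact sum_congr rfl fun l hl =>
          natCast_mul_inv_sub_one_sq (hζ.pow_pow_eq_one l) (hζ.pow_ne_one_of_mem_Ico hl)
    _ = (∑ k ∈ range N, (k : K)) * ∑ l ∈ Ico 1 N, (ζ ^ l - 1)⁻¹
          + ∑ k ∈ range N, (k : K) * ∑ i ∈ range k, ∑ l ∈ Ico 1 N, (ζ ^ l) ^ i := by
        rw [sum_add_distrib, mul_sum, sum_comm]
        simp_rw [mul_sum, sum_comm (s := Ico 1 N)]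
    _ = _ := by
        congr 1
        exact sum_congr rfl fun k hk =>
          hζ.natCast_mul_sum_range_sum_Ico_pow_pow (mem_range.1 hk).le

theorem sum_inv_sub_one [NeZero N] (hζ : IsPrimitiveRoot ζ N) :
    2 * ∑ l ∈ Ico 1 N, (ζ ^ l - 1)⁻¹ = -((N : K) - 1) := by
  apply mul_left_cancel₀ hζ.neZero'.out
  linear_combination 2 * hζ.natCast_mul_sum_inv_sub_one - two_mul_sum_range_natCast (R := K) N

theorem sum_inv_sub_one_sq [NeZero N] (hζ : IsPrimitiveRoot ζ N) :
    12 * ∑ l ∈ Ico 1 N, ((ζ ^ l - 1) ^ 2)⁻¹ = -(((N : K) - 1) * ((N : K) - 5)) := by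
  have h := hζ.natCast_mul_sum_inv_sub_one_sq
  simp only [mul_sub, sum_sub_distrib, ← sum_mul, ← sq] at h
  apply mul_left_cancel₀ hζ.neZero'.out
  linear_combination 12 * h + 6 * (∑ k ∈ range N, (k : K)) * hζ.sum_inv_sub_one
    + 3 * (N + 1) * two_mul_sum_range_natCast (R := K) N
    - 2 * six_mul_sum_range_natCast_sq (R := K) N

theorem sum_sq_div_sub_one_sq [NeZero N] (hζ : IsPrimitiveRoot ζ N) :
    12 * ∑ l ∈ Ico 1 N, (ζ ^ l) ^ 2 / (ζ ^ l - 1) ^ 2 = -(((N : K) - 1) * ((N : K) - 5)) := by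
  rw [sum_congr rfl fun l hl => sq_div_sub_one_sq (hζ.pow_ne_one_of_mem_Ico hl)]
  rw [sum_add_distrib, sum_add_distrib, ← mul_sum, sum_const, Nat.card_Ico, nsmul_eq_mul,
    Nat.cast_sub NeZero.one_le]
  linear_combination 12 * hζ.sum_inv_sub_one + hζ.sum_inv_sub_one_sq

end IsPrimitiveRoot

/-- `S_{2,2} = ∑_{l=1}^{N-1} ζ^{2l}/(ζ^l - 1)² = -(N-1)(N-5)/12`; consequently the
critical central circulation `γ_N* = (N-1)(N-5)/12` satisfies `γ_N* = -S_{2,2}`. -/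
theorem S_two_two (N : ℕ) (hN : 2 ≤ N) :
    S N 2 2 = -(((N : ℂ) - 1) * ((N : ℂ) - 5)) / 12 ∧
    ((((N : ℝ) - 1) * ((N : ℝ) - 5) / 12 : ℝ) : ℂ) = -S N 2 2 := by
  have : NeZero N := ⟨by omega⟩
  have hζ := Complex.isPrimitiveRoot_exp N (NeZero.ne N)
  have hS : S N 2 2 = -(((N : ℂ) - 1) * ((N : ℂ) - 5)) / 12 := by
    rw [eq_div_iff (by norm_num), mul_comm, ← hζ.sum_sq_div_sub_one_sq]
    simp_rw [S, pow_mul]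
  refine ⟨hS, ?_⟩
  push_cast
  rw [hS]
  ring
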